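/- Let G be a graph and X ⊆ V(G)∖W be a set of size m such that every vertex of X has fewer than m neighbors in W, where |W| ≥ m². If |W ∩ N_G(X)| ≥ |W| − (m−1), then m² − m + 1 ≤ e_G(X,W) ≤ m² − m, a contradiction; hence no such set X exists. -/

import Mathlib

open Finset

/-- The external neighborhood of a vertex set `X` in a graph `G`: all vertices outside `X`
with a neighbor in `X`. -/
noncomputable def extNbhd {V : Type*} [Fintype V] [DecidableEq V] (G : SimpleGraph V)
    (X : Finset V) : Finset V := by
  classical exact univ.filter fun v => v ∉ X ∧ ∃ x ∈ X, G.Adj x v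

/-- `eCount G X Y` is the number of ordered pairs `(x, y) ∈ X × Y` with `{x,y} ∈ E(G)`. -/
noncomputable def eCount {V : Type*} [DecidableEq V] (G : SimpleGraph V)
    (X Y : Finset V) : ℕ := by
  classical exact ((X ×ˢ Y).filter fun p => G.Adj p.1 p.2).card

/-- `mOf n d = ⌈n / (2d)⌉`. -/
noncomputable def mOf (n : ℕ) (d : ℝ) : ℕ := ⌈(n : ℝ) / (2 * d)⌉₊

/-- A graph `G` is an `(n,d)`-expander if it has `n` vertices,
(E1) `|N_G(X)| ≥ d|X|` for all `X` with `1 ≤ |X| < m(n,d)`, and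
(E2) there is an edge between any two disjoint sets of size `m(n,d)`. -/
def IsExpander {V : Type*} [Fintype V] [DecidableEq V] (G : SimpleGraph V)
    (n : ℕ) (d : ℝ) : Prop :=
  Fintype.card V = n ∧
  (∀ X : Finset V, 1 ≤ X.card → X.card < mOf n d →
    d * X.card ≤ ((extNbhd G X).card : ℝ)) ∧
  (∀ X Y : Finset V, Disjoint X Y → X.card = mOf n d → Y.card = mOf n d →
    0 < eCount G X Y)

/-!
Every vertex of `W ∩ N_G(X)` is the endpoint of an edge from `X`, so
`|W| - (m - 1) ≤ |W ∩ N_G(X)| ≤ e_G(X, W)`, while the degree bound gives `e_G(X, W) ≤ m (m - 1)`;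
with `|W| ≥ m²` the two are incompatible.
-/

section eCount

variable {V : Type*} [DecidableEq V] (G : SimpleGraph V)

theorem eCount_eq_sum_card_filter_adj [DecidableRel G.Adj] (X Y : Finset V) :
    eCount G X Y = ∑ x ∈ X, (Y.filter fun y => G.Adj x y).card := by
  simp only [eCount, card_filter, sum_product]
  congr!

theorem eCount_le_card_mul [DecidableRel G.Adj] {X Y : Finset V} {k : ℕ}
    (hdeg : ∀ x ∈ X, (Y.filter fun y => G.Adj x y).card ≤ k) :
    eCount G X Y ≤ X.card * k := by
  rw [eCount_eq_sum_card_filter_adj]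
  simpa using sum_le_card_nsmul X _ k hdeg

theorem card_inter_extNbhd_le_eCount [Fintype V] (X W : Finset V) :
    (W ∩ extNbhd G X).card ≤ eCount G X W := by
  classical
  refine card_le_card_of_surjOn Prod.snd fun w hw => ?_
  obtain ⟨hwW, hwN⟩ := mem_inter.1 hw
  obtain ⟨x, hx, hxw⟩ := (mem_filter.1 hwN).2.2
  exact ⟨(x, w), mem_filter.2 ⟨mem_product.2 ⟨hx, hwW⟩, hxw⟩, rfl⟩

end eCount

theorem stmt_5_general {V : Type*} [Fintype V] [DecidableEq V] (G : SimpleGraph V)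
    [DecidableRel G.Adj] (m : ℕ) (hm : 1 ≤ m) (W X : Finset V)
    (hW : m ^ 2 ≤ W.card) (hX : X.card = m)
    (hdeg : ∀ x ∈ X, (W.filter fun w => G.Adj x w).card < m)
    (hN : W.card - (m - 1) ≤ (W ∩ extNbhd G X).card) : False := by
  obtain ⟨k, rfl⟩ : ∃ k, m = k + 1 := ⟨m - 1, by omega⟩
  have hupper : eCount G X W ≤ (k + 1) * k := by
    rw [← hX]
    exact eCount_le_card_mul G fun x hx => Nat.le_of_lt_succ (hdeg x hx)
  have hlower := card_inter_extNbhd_le_eCount G X W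
  have hsq : (k + 1) ^ 2 = (k + 1) * k + k + 1 := by ring
  omega

/-- the counting argument of the Small Exceptional Sets lemma. If `|W| ≥ m²`,
`X` is disjoint from `W` with `|X| = m`, every vertex of `X` has fewer than `m` neighbors
in `W`, and `|W ∩ N_G(X)| ≥ |W| - (m-1)`, then we get the contradictory chain
`m² - m + 1 ≤ e_G(X,W) ≤ m² - m`; hence no such `X` exists. -/
theorem stmt_5 {V : Type*} [Fintype V] [DecidableEq V] (G : SimpleGraph V)
    [DecidableRel G.Adj] (m : ℕ) (hm : 1 ≤ m) (W X : Finset V)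
    (hW : m ^ 2 ≤ W.card) (hd : Disjoint X W) (hX : X.card = m)
    (hdeg : ∀ x ∈ X, (W.filter fun w => G.Adj x w).card < m)
    (hN : W.card - (m - 1) ≤ (W ∩ extNbhd G X).card) : False :=
  stmt_5_general G m hm W X hW hX hdeg hN
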